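/- Let G₁=(V₁,E₁) and G₂=(V₂,E₂) be vertex-disjoint finite simple graphs with V₁ and V₂ both nonempty. Then the independent neighborhood polynomial of their join equals the independence polynomial of their join: N^{(i)}(G₁ + G₂, x) = I(G₁ + G₂, x). Equivalently, every independent set of G₁ + G₂ is contained in the open neighborhood of some vertex of G₁ + G₂. -/

import Mathlib

open Finset Polynomial

open scoped Classical in
/-- The neighborhood complex of `G`: all finite vertex subsets contained in the open
neighborhood of some vertex. -/
noncomputable def nhdComplex {V : Type*} [Fintype V] (G : SimpleGraph V) : Finset (Finset V) :=
  Finset.univ.filter (fun A => ∃ v : V, (A : Set V) ⊆ G.neighborSet v)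

open scoped Classical in
/-- The independent neighborhood polynomial of `G`. -/
noncomputable def indNbhdPoly {V : Type*} [Fintype V] (G : SimpleGraph V) : Polynomial ℤ :=
  ∑ A ∈ (nhdComplex G).filter (fun A => ∀ u ∈ A, ∀ w ∈ A, ¬ G.Adj u w), X ^ A.card

open scoped Classical in
/-- The independence polynomial of `G`: the generating function of the independent
vertex subsets of `G` (including the empty set). -/
noncomputable def indepPoly {V : Type*} [Fintype V] (G : SimpleGraph V) : Polynomial ℤ :=
  ∑ A ∈ Finset.univ.filter (fun A : Finset V => ∀ u ∈ A, ∀ w ∈ A, ¬ G.Adj u w), X ^ A.card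

/-- The join of two vertex-disjoint graphs: their disjoint union together with all
edges joining vertices of the first to vertices of the second. -/
def SimpleGraph.graphJoin {V₁ V₂ : Type*} (G₁ : SimpleGraph V₁) (G₂ : SimpleGraph V₂) :
    SimpleGraph (V₁ ⊕ V₂) :=
  (G₁ ⊕g G₂) ⊔ completeBipartiteGraph V₁ V₂

/-! Every vertex of `V₁` is adjacent to every vertex of `V₂` in the join, so an independent set
cannot meet both sides. If it lies in `V₁` it is contained in the neighborhood of any vertex of
`V₂`, and symmetrically; this needs both sides to be nonempty. -/

theorem indNbhdPoly_eq_indepPoly_of_forall_exists_subset_neighborSet {V : Type*} [Fintype V]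
    (G : SimpleGraph V)
    (h : ∀ A : Finset V, (∀ u ∈ A, ∀ w ∈ A, ¬ G.Adj u w) → ∃ v, (A : Set V) ⊆ G.neighborSet v) :
    indNbhdPoly G = indepPoly G := by
  classical
  unfold indNbhdPoly indepPoly nhdComplex
  rw [Finset.filter_filter]
  refine Finset.sum_congr (Finset.filter_congr fun A _ => ?_) fun _ _ => rfl
  exact ⟨And.right, fun hA => ⟨h A hA, hA⟩⟩

namespace SimpleGraph

variable {V₁ V₂ : Type*} (G₁ : SimpleGraph V₁) (G₂ : SimpleGraph V₂)

theorem graphJoin_adj_inl_inr (a : V₁) (b : V₂) : (G₁.graphJoin G₂).Adj (.inl a) (.inr b) :=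
  Or.inr (by simp)

theorem range_inl_subset_neighborSet_inr (b : V₂) :
    Set.range Sum.inl ⊆ (G₁.graphJoin G₂).neighborSet (.inr b) := by
  rintro _ ⟨a, rfl⟩
  exact (G₁.graphJoin_adj_inl_inr G₂ a b).symm

theorem range_inr_subset_neighborSet_inl (a : V₁) :
    Set.range Sum.inr ⊆ (G₁.graphJoin G₂).neighborSet (.inl a) := by
  rintro _ ⟨b, rfl⟩
  exact G₁.graphJoin_adj_inl_inr G₂ a b

theorem subset_range_inl_or_inr_of_indep {A : Set (V₁ ⊕ V₂)}
    (hA : ∀ u ∈ A, ∀ w ∈ A, ¬ (G₁.graphJoin G₂).Adj u w) :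
    A ⊆ Set.range Sum.inl ∨ A ⊆ Set.range Sum.inr := by
  rw [or_iff_not_imp_left, Set.not_subset]
  rintro ⟨u, huA, hu⟩ w hwA
  obtain ⟨b, rfl⟩ : ∃ b, u = .inr b := by
    cases u with
    | inl a => exact (hu ⟨a, rfl⟩).elim
    | inr b => exact ⟨b, rfl⟩
  cases w with
  | inl a => exact (hA _ hwA _ huA (G₁.graphJoin_adj_inl_inr G₂ a b)).elim
  | inr c => exact ⟨c, rfl⟩

end SimpleGraph

/-- The independent neighborhood polynomial of the join of two nonempty graphs equals
the independence polynomial of the join. -/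
theorem indNbhdPoly_join_eq_indepPoly {V₁ V₂ : Type*} [Fintype V₁] [Fintype V₂]
    [Nonempty V₁] [Nonempty V₂] (G₁ : SimpleGraph V₁) (G₂ : SimpleGraph V₂) :
    indNbhdPoly (G₁.graphJoin G₂) = indepPoly (G₁.graphJoin G₂) := by
  refine indNbhdPoly_eq_indepPoly_of_forall_exists_subset_neighborSet _ fun A hA => ?_
  obtain ⟨a⟩ := ‹Nonempty V₁›
  obtain ⟨b⟩ := ‹Nonempty V₂›
  rcases G₁.subset_range_inl_or_inr_of_indep G₂ hA with hl | hr
  · exact ⟨.inr b, hl.trans (G₁.range_inl_subset_neighborSet_inr G₂ b)⟩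
  · exact ⟨.inl a, hr.trans (G₁.range_inr_subset_neighborSet_inl G₂ a)⟩
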